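/- Let u be a unit quaternion. Consider the point (u, 1) ∈ S³×S³ (the image of the immersion f : S³ → S³×S³, f(u) = (u,1)), whose tangent image consists of the vectors Z = (U, 0) with Re(u⁻¹U) = 0. Then: (i) for all such Z = (U,0) and Z' = (U',0), g(Z', J(Z)) = 0, i.e. the immersion is Lagrangian; (ii) P(Z) = −(1/2)·Z − (√3/2)·J(Z) for every such Z, i.e. all three angle functions of this Lagrangian immersion satisfy 2θ = 4π/3. Here J, g, and P are evaluated at the point (u,1). -/

import Mathlib

open Quaternion

noncomputable section

/-- Euclidean inner product on ℍ ≅ ℝ⁴: ⟨a,b⟩ = Re(a · conj b). -/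
def innQ (a b : ℍ[ℝ]) : ℝ := (a * star b).re

/-- Euclidean product inner product on ℍ × ℍ. -/
def innP (Z Z' : ℍ[ℝ] × ℍ[ℝ]) : ℝ := innQ Z.1 Z'.1 + innQ Z.2 Z'.2

/-- Tangency to S³ × S³ at (p,q). -/
def Tangent (p q : ℍ[ℝ]) (Z : ℍ[ℝ] × ℍ[ℝ]) : Prop :=
  (p⁻¹ * Z.1).re = 0 ∧ (q⁻¹ * Z.2).re = 0

/-- The almost complex structure J of the nearly Kähler S³×S³ at the point (p,q). -/
def Jmap (p q : ℍ[ℝ]) (Z : ℍ[ℝ] × ℍ[ℝ]) : ℍ[ℝ] × ℍ[ℝ] :=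
  (Real.sqrt 3)⁻¹ •
    ((2 * (p * q⁻¹ * Z.2) - Z.1, -(2 * (q * p⁻¹ * Z.1)) + Z.2) : ℍ[ℝ] × ℍ[ℝ])

/-- The nearly Kähler metric g at the point (p,q). -/
def gmet (p q : ℍ[ℝ]) (Z Z' : ℍ[ℝ] × ℍ[ℝ]) : ℝ :=
  (4/3) * (innQ Z.1 Z'.1 + innQ Z.2 Z'.2)
    - (2/3) * (innQ (p⁻¹ * Z.1) (q⁻¹ * Z'.2) + innQ (p⁻¹ * Z'.1) (q⁻¹ * Z.2))

/-- The almost product structure P at the point (p,q). -/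
def Pmap (p q : ℍ[ℝ]) (Z : ℍ[ℝ] × ℍ[ℝ]) : ℍ[ℝ] × ℍ[ℝ] :=
  (p * q⁻¹ * Z.2, q * p⁻¹ * Z.1)

/-- The usual product structure Q. -/
def Qmap (Z : ℍ[ℝ] × ℍ[ℝ]) : ℍ[ℝ] × ℍ[ℝ] := (-Z.1, Z.2)

/-- The quaternion units i, j, k. -/
def qi : ℍ[ℝ] := ⟨0, 1, 0, 0⟩
def qj : ℍ[ℝ] := ⟨0, 0, 1, 0⟩
def qk : ℍ[ℝ] := ⟨0, 0, 0, 1⟩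

/-! At `(u, 1)` one has `J(U, 0) = -(1/√3) (U, 2 u⁻¹ U)`. The Lagrangian condition then reduces
to `⟪u⁻¹ U', u⁻¹ U⟫ = ⟪U', U⟫`, i.e. to left multiplication by the unit quaternion `u⁻¹` being an
isometry of `ℍ`, while the identity for `P` is a direct computation. -/

open scoped RealInnerProductSpace

lemma innQ_eq_inner (a b : ℍ[ℝ]) : innQ a b = ⟪a, b⟫ := rfl

lemma inner_mul_left_mul_left (v a b : ℍ[ℝ]) : ⟪v * a, v * b⟫ = ‖v‖ ^ 2 * ⟪a, b⟫ := by
  simp only [real_inner_eq_norm_add_mul_self_sub_norm_mul_self_sub_norm_mul_self_div_two,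
    ← mul_add, norm_mul]
  ring

lemma inner_inv_mul_inv_mul {u : ℍ[ℝ]} (hu : ‖u‖ = 1) (a b : ℍ[ℝ]) :
    ⟪u⁻¹ * a, u⁻¹ * b⟫ = ⟪a, b⟫ := by
  rw [inner_mul_left_mul_left, norm_inv, hu, inv_one, one_pow, one_mul]

lemma Jmap_left (p U : ℍ[ℝ]) :
    Jmap p 1 (U, 0) = (Real.sqrt 3)⁻¹ • ((-U, -(2 : ℝ) • (p⁻¹ * U)) : ℍ[ℝ] × ℍ[ℝ]) := by
  simp [Jmap, two_mul, two_smul]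

lemma gmet_left_Jmap_left (p U U' : ℍ[ℝ]) :
    gmet p 1 (U', 0) (Jmap p 1 (U, 0)) =
      4 / (3 * Real.sqrt 3) * (⟪p⁻¹ * U', p⁻¹ * U⟫ - ⟪U', U⟫) := by
  simp only [gmet, Jmap_left, innQ_eq_inner, Prod.smul_mk, inv_one, one_mul, mul_zero,
    inner_zero_left, inner_zero_right, inner_smul_right, inner_neg_right, mul_smul_comm]
  ring

lemma Pmap_left (p U : ℍ[ℝ]) :
    Pmap p 1 (U, 0) =
      -((1/2 : ℝ) • ((U, 0) : ℍ[ℝ] × ℍ[ℝ])) - (Real.sqrt 3 / 2) • Jmap p 1 (U, 0) := by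
  have hs : Real.sqrt 3 / 2 * (Real.sqrt 3)⁻¹ = 1 / 2 := by field_simp
  rw [Jmap_left, smul_smul, hs]
  ext <;> simp [Pmap]

/-- the immersion u ↦ (u,1) is Lagrangian with all angle functions
satisfying 2θ = 4π/3, i.e. P = -(1/2)·id - (√3/2)·J on its tangent space. -/
theorem stmt_13 (u : ℍ[ℝ]) (hu : ‖u‖ = 1) :
    (∀ U U' : ℍ[ℝ], (u⁻¹ * U).re = 0 → (u⁻¹ * U').re = 0 →
      gmet u 1 (U', 0) (Jmap u 1 (U, 0)) = 0) ∧
    (∀ U : ℍ[ℝ], (u⁻¹ * U).re = 0 →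
      Pmap u 1 (U, 0) =
        -((1/2 : ℝ) • ((U, 0) : ℍ[ℝ] × ℍ[ℝ])) - (Real.sqrt 3 / 2) • Jmap u 1 (U, 0)) := by
  refine ⟨fun U U' _ _ => ?_, fun U _ => Pmap_left u U⟩
  rw [gmet_left_Jmap_left, inner_inv_mul_inv_mul hu, sub_self, mul_zero]
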